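/- Let H⁺, H⁻ > 0 and ρ⁺ > 0, ρ⁻ ≥ 0 with ρ⁺ + ρ⁻ = 1. Then for all x > 0, x / ((1+x)(ρ⁻·tanh(H⁺x) + ρ⁺·tanh(H⁻x))) ≤ 1 / (ρ⁻·min(1,H⁺) + ρ⁺·min(1,H⁻)). In particular the supremum over x > 0 of the left-hand side is finite. -/
import Mathlib

/-- `y/(1+y) ≤ tanh y` for `y ≥ 0`. -/
lemma tanh_ge_div (y : ℝ) (hy : 0 ≤ y) : y / (1 + y) ≤ Real.tanh y := by
  have hc : 0 < Real.cosh y := Real.cosh_pos y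
  have h1 : (0:ℝ) < 1 + y := by linarith
  rw [Real.tanh_eq_sinh_div_cosh, div_le_div_iff₀ h1 hc]
  have hexp : 2 * y + 1 ≤ Real.exp (2 * y) := by
    linarith [Real.add_one_le_exp (2 * y)]
  have h2 : Real.exp (2 * y) = Real.exp y * Real.exp y := by
    rw [← Real.exp_add]; ring_nf
  have h3 : Real.exp (-y) * Real.exp y = 1 := by
    rw [← Real.exp_add]; simp
  have hpos : 0 < Real.exp y := Real.exp_pos y
  have hpos' : 0 < Real.exp (-y) := Real.exp_pos _
  rw [Real.sinh_eq, Real.cosh_eq]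
  nlinarith [mul_nonneg hpos'.le (mul_nonneg hy hy)]

/-- `tanh (H*x) ≥ min 1 H * (x/(1+x))` for `H > 0`, `x > 0`. -/
lemma tanh_scale (H x : ℝ) (hH : 0 < H) (hx : 0 < x) :
    min 1 H * (x / (1 + x)) ≤ Real.tanh (H * x) := by
  have h1 : (0:ℝ) < 1 + x := by linarith
  have h2 : (0:ℝ) < 1 + H * x := by positivity
  have key : min 1 H * (x / (1 + x)) ≤ (H * x) / (1 + H * x) := by
    rw [mul_div_assoc', div_le_div_iff₀ h1 h2]
    rcases le_total (1:ℝ) H with h | h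
    · rw [min_eq_left h]
      nlinarith [mul_pos hx hx]
    · rw [min_eq_right h]
      nlinarith [mul_pos hx hx, mul_pos (mul_pos hH hx) hx]
  calc min 1 H * (x / (1 + x)) ≤ (H * x) / (1 + H * x) := key
    _ ≤ Real.tanh (H * x) := tanh_ge_div _ (by positivity)

/-- Upper bound for the Kelvin-criterion geometric constant `ℭ(0)`, and
finiteness of the supremum. -/
theorem kelvin_constant_bound
    (Hp Hm ρp ρm : ℝ) (hHp : 0 < Hp) (hHm : 0 < Hm)
    (hρp : 0 < ρp) (hρm : 0 ≤ ρm) (hsum : ρp + ρm = 1) :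
    (∀ x : ℝ, 0 < x →
        x / ((1 + x) * (ρm * Real.tanh (Hp * x) + ρp * Real.tanh (Hm * x)))
          ≤ 1 / (ρm * min 1 Hp + ρp * min 1 Hm))
    ∧ BddAbove
        ((fun x : ℝ =>
            x / ((1 + x) * (ρm * Real.tanh (Hp * x) + ρp * Real.tanh (Hm * x))))
          '' Set.Ioi 0) := by
  set A := ρm * min 1 Hp + ρp * min 1 Hm with hA
  have hmp : (0:ℝ) < min 1 Hp := lt_min one_pos hHp
  have hmm : (0:ℝ) < min 1 Hm := lt_min one_pos hHm
  have hApos : 0 < A := by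
    have := mul_pos hρp hmm
    have := mul_nonneg hρm hmp.le
    linarith
  have main : ∀ x : ℝ, 0 < x →
      x / ((1 + x) * (ρm * Real.tanh (Hp * x) + ρp * Real.tanh (Hm * x))) ≤ 1 / A := by
    intro x hx
    have h1 : (0:ℝ) < 1 + x := by linarith
    have tp := tanh_scale Hp x hHp hx
    have tm := tanh_scale Hm x hHm hx
    have hD : A * x ≤ (1 + x) * (ρm * Real.tanh (Hp * x) + ρp * Real.tanh (Hm * x)) := by
      have hsumge : A * (x / (1 + x)) ≤ ρm * Real.tanh (Hp * x) + ρp * Real.tanh (Hm * x) := by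
        have h1' := mul_le_mul_of_nonneg_left tp hρm
        have h2' := mul_le_mul_of_nonneg_left tm hρp.le
        calc A * (x / (1+x)) = ρm * (min 1 Hp * (x/(1+x))) + ρp * (min 1 Hm * (x/(1+x))) := by ring
          _ ≤ _ := by linarith
      have := mul_le_mul_of_nonneg_left hsumge h1.le
      calc A * x = (1 + x) * (A * (x / (1 + x))) := by field_simp
        _ ≤ _ := this
    have hDpos : 0 < (1 + x) * (ρm * Real.tanh (Hp * x) + ρp * Real.tanh (Hm * x)) :=
      lt_of_lt_of_le (by positivity) hD
    rw [div_le_div_iff₀ hDpos hApos]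
    nlinarith
  refine ⟨main, ⟨1 / A, ?_⟩⟩
  rintro y ⟨x, hx, rfl⟩
  exact main x hx
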